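/- Let φ, θ : ℝ³ → Mₙ(ℝ) be infinitely differentiable and satisfy the inhomogeneous Burgers equations φ_y = φ_xx + 2φ_x φ + 2θ_x and φ_t = φ_xxx + 3φ_xx φ + 3φ_x² + 3φ_x φ² + 3θ_x φ + (3/2)(θ_y + θ_xx). Then φ satisfies the noncommutative potential KP equation ∂_x(4φ_t − φ_xxx − 6φ_x²) − 3φ_yy + 6(φ_x φ_y − φ_y φ_x) = 0. -/

import Mathlib

/-!
In any ring with two commuting derivations `∂x, ∂y`, differentiating the first Burgers equation
twice in `x` and once in `y`, and the second once in `x`, rewrites the pKP expression in terms of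
`x`-derivatives of `φ` and `θ` and the mixed derivative `θ_xy = θ_yx`. The `θ`-terms then cancel,
leaving a noncommutative polynomial identity. Smooth matrix-valued functions form such a ring,
the partial derivatives commuting by symmetry of second derivatives.
-/

attribute [local instance] Matrix.normedAddCommGroup Matrix.normedSpace

/-- Partial derivative in the `x`-direction of a function of three real variables. -/
noncomputable def pdx {E : Type*} [NormedAddCommGroup E] [NormedSpace ℝ E]
    (f : ℝ × ℝ × ℝ → E) : ℝ × ℝ × ℝ → E :=
  fun p => fderiv ℝ f p (1, 0, 0)

/-- Partial derivative in the `y`-direction of a function of three real variables. -/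
noncomputable def pdy {E : Type*} [NormedAddCommGroup E] [NormedSpace ℝ E]
    (f : ℝ × ℝ × ℝ → E) : ℝ × ℝ × ℝ → E :=
  fun p => fderiv ℝ f p (0, 1, 0)

/-- Partial derivative in the `t`-direction of a function of three real variables. -/
noncomputable def pdt {E : Type*} [NormedAddCommGroup E] [NormedSpace ℝ E]
    (f : ℝ × ℝ × ℝ → E) : ℝ × ℝ × ℝ → E :=
  fun p => fderiv ℝ f p (0, 0, 1)

theorem pKP_of_inhomogeneous_burgers_of_derivations {K A : Type*} [Field K] [CharZero K]
    [Ring A] [Algebra K A] (dx dy : A →ₗ[K] A) (dt : A → A)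
    (hdx : ∀ a b, dx (a * b) = dx a * b + a * dx b)
    (hdy : ∀ a b, dy (a * b) = dy a * b + a * dy b)
    (hcomm : ∀ a, dx (dy a) = dy (dx a)) {φ θ : A}
    (hb1 : dy φ = dx (dx φ) + (2 : K) • (dx φ * φ) + (2 : K) • dx θ)
    (hb2 : dt φ = dx (dx (dx φ)) + (3 : K) • (dx (dx φ) * φ) + (3 : K) • (dx φ * dx φ)
        + (3 : K) • (dx φ * (φ * φ)) + (3 : K) • (dx θ * φ)
        + (3 / 2 : K) • (dy θ + dx (dx θ))) :
    dx ((4 : K) • dt φ - dx (dx (dx φ)) - (6 : K) • (dx φ * dx φ)) - (3 : K) • dy (dy φ)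
      + (6 : K) • (dx φ * dy φ - dy φ * dx φ) = 0 := by
  have hxy : dx (dy φ) = dx (dx (dx φ)) + (2 : K) • (dx (dx φ) * φ + dx φ * dx φ)
      + (2 : K) • dx (dx θ) := by
    rw [hb1]; simp only [map_add, map_smul, hdx]
  have hxxy : dx (dx (dy φ)) = dx (dx (dx (dx φ)))
      + (2 : K) • (dx (dx (dx φ)) * φ + (2 : K) • (dx (dx φ) * dx φ) + dx φ * dx (dx φ))
      + (2 : K) • dx (dx (dx θ)) := by
    rw [hxy]; simp only [map_add, map_smul, hdx]; module
  have hyy : dy (dy φ) = dx (dx (dy φ)) + (2 : K) • (dx (dy φ) * φ + dx φ * dy φ)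
      + (2 : K) • dx (dy θ) := by
    conv_lhs => rw [hb1]
    simp only [map_add, map_smul, hdy, ← hcomm]
  rw [hyy, hxxy, hxy, hb2, hb1]
  simp only [map_add, map_sub, map_smul, hdx, mul_add, add_mul, smul_add, mul_assoc,
    smul_mul_assoc, mul_smul_comm, smul_smul]
  module

open scoped ContDiff

section

variable {E : Type*} [NormedAddCommGroup E] [NormedSpace ℝ E]
  {F : Type*} [NormedAddCommGroup F] [NormedSpace ℝ F]

theorem fderiv_fderiv_apply_comm {f : E → F} {p : E} (hf : ContDiffAt ℝ 2 f p) (v w : E) :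
    fderiv ℝ (fun q => fderiv ℝ f q v) p w = fderiv ℝ (fun q => fderiv ℝ f q w) p v := by
  have hd : DifferentiableAt ℝ (fderiv ℝ f) p :=
    (hf.fderiv_right (m := 1) le_rfl).differentiableAt one_ne_zero
  have hsymm : IsSymmSndFDerivAt ℝ f p :=
    hf.isSymmSndFDerivAt (by simp [minSmoothness_of_isRCLikeNormedField])
  rw [fderiv_clm_apply hd (differentiableAt_const v),
    fderiv_clm_apply hd (differentiableAt_const w)]
  simpa using (hsymm w v)

variable {m : Type*} [Fintype m] [DecidableEq m]

-- `Matrix m m ℝ` has no `NormedRing` instance here, so `ContinuousLinearMap.mul` is unavailable;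
-- continuity of the product comes from finite dimensionality instead.
noncomputable def Matrix.mulCLM (m : Type*) [Fintype m] [DecidableEq m] :
    Matrix m m ℝ →L[ℝ] Matrix m m ℝ →L[ℝ] Matrix m m ℝ :=
  (LinearMap.mul ℝ (Matrix m m ℝ)).toContinuousBilinearMap

theorem ContDiff.matrix_mul {n : WithTop ℕ∞} {f g : E → Matrix m m ℝ}
    (hf : ContDiff ℝ n f) (hg : ContDiff ℝ n g) : ContDiff ℝ n (fun x => f x * g x) :=
  (Matrix.mulCLM m).isBoundedBilinearMap.contDiff.comp (hf.prodMk hg)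

theorem fderiv_matrix_mul_apply {f g : E → Matrix m m ℝ} {p : E}
    (hf : DifferentiableAt ℝ f p) (hg : DifferentiableAt ℝ g p) (v : E) :
    fderiv ℝ (fun x => f x * g x) p v = fderiv ℝ f p v * g p + f p * fderiv ℝ g p v := by
  rw [add_comm]
  exact congrArg (· v)
    ((Matrix.mulCLM m).hasFDerivAt_of_bilinear hf.hasFDerivAt hg.hasFDerivAt).fderiv

end

noncomputable def smoothMatrixFunctions (E : Type*) [NormedAddCommGroup E] [NormedSpace ℝ E]
    (m : Type*) [Fintype m] [DecidableEq m] :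
    Subalgebra ℝ (E → Matrix m m ℝ) where
  carrier := {f | ContDiff ℝ ∞ f}
  mul_mem' {f _} (hf : ContDiff ℝ ∞ f) hg := hf.matrix_mul hg
  add_mem' {f _} (hf : ContDiff ℝ ∞ f) hg := hf.add hg
  algebraMap_mem' _ := (contDiff_const : ContDiff ℝ ∞ _)

namespace smoothMatrixFunctions

variable {E : Type*} [NormedAddCommGroup E] [NormedSpace ℝ E]
  {m : Type*} [Fintype m] [DecidableEq m]

theorem contDiff (f : smoothMatrixFunctions E m) : ContDiff ℝ ∞ (f : E → Matrix m m ℝ) := f.2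

theorem differentiableAt (f : smoothMatrixFunctions E m) (p : E) :
    DifferentiableAt ℝ (f : E → Matrix m m ℝ) p :=
  (contDiff f).differentiable (by simp) p

noncomputable def dirDeriv (v : E) :
    smoothMatrixFunctions E m →ₗ[ℝ] smoothMatrixFunctions E m where
  toFun f := ⟨fun p => fderiv ℝ f p v, show ContDiff ℝ ∞ _ from
    ((contDiff f).fderiv_right (m := ∞) (by simp)).clm_apply contDiff_const⟩
  map_add' f g := Subtype.ext <| funext fun p =>
    congrArg (· v) (fderiv_add (differentiableAt f p) (differentiableAt g p))
  map_smul' c f := Subtype.ext <| funext fun p =>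
    congrArg (· v) (fderiv_const_smul (differentiableAt f p) c)

theorem dirDeriv_mul (v : E) (f g : smoothMatrixFunctions E m) :
    dirDeriv v (f * g) = dirDeriv v f * g + f * dirDeriv v g :=
  Subtype.ext <| funext fun p =>
    fderiv_matrix_mul_apply (differentiableAt f p) (differentiableAt g p) v

theorem dirDeriv_comm (v w : E) (f : smoothMatrixFunctions E m) :
    dirDeriv v (dirDeriv w f) = dirDeriv w (dirDeriv v f) :=
  Subtype.ext <| funext fun _ =>
    fderiv_fderiv_apply_comm ((contDiff f).contDiffAt.of_le (WithTop.coe_le_coe.mpr le_top)) w v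

end smoothMatrixFunctions

/-- Any solution of the first two inhomogeneous Burgers equations (the pKP
hierarchy written as an inhomogeneous Burgers hierarchy) solves the
noncommutative potential KP equation. -/
theorem pKP_of_inhomogeneous_burgers (n : ℕ)
    (φ θ : ℝ × ℝ × ℝ → Matrix (Fin n) (Fin n) ℝ)
    (hφ : ContDiff ℝ (⊤ : ℕ∞) φ) (hθ : ContDiff ℝ (⊤ : ℕ∞) θ)
    (hb1 : ∀ p, pdy φ p = pdx (pdx φ) p + 2 • (pdx φ p * φ p) + 2 • pdx θ p)
    (hb2 : ∀ p, pdt φ p = pdx (pdx (pdx φ)) p + 3 • (pdx (pdx φ) p * φ p)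
        + 3 • (pdx φ p * pdx φ p) + 3 • (pdx φ p * (φ p * φ p))
        + 3 • (pdx θ p * φ p)
        + (3 / 2 : ℝ) • (pdy θ p + pdx (pdx θ) p)) :
    ∀ p, pdx (fun q => (4 : ℝ) • pdt φ q - pdx (pdx (pdx φ)) q
          - (6 : ℝ) • (pdx φ q * pdx φ q)) p
        - (3 : ℝ) • pdy (pdy φ) p
        + (6 : ℝ) • (pdx φ p * pdy φ p - pdy φ p * pdx φ p) = 0 := by
  intro p
  simp only [← ofNat_smul_eq_nsmul ℝ] at hb1 hb2
  let D := smoothMatrixFunctions.dirDeriv (E := ℝ × ℝ × ℝ) (m := Fin n)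
  have key := pKP_of_inhomogeneous_burgers_of_derivations
    (D (1, 0, 0)) (D (0, 1, 0)) (D (0, 0, 1))
    (smoothMatrixFunctions.dirDeriv_mul _) (smoothMatrixFunctions.dirDeriv_mul _)
    (smoothMatrixFunctions.dirDeriv_comm _ _)
    (φ := ⟨φ, hφ⟩) (θ := ⟨θ, hθ⟩) (Subtype.ext (funext hb1)) (Subtype.ext (funext hb2))
  exact congrFun (congrArg Subtype.val key) p
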